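/- Let A → B and A → C be étale homomorphisms of commutative rings, and let g : B → C be any A-algebra homomorphism. Then g is étale. -/

import Mathlib

universe u in
/-- If `B` and `C` are étale commutative `A`-algebras, then any `A`-algebra
homomorphism `g : B → C` is étale (i.e. `C` is étale as a `B`-algebra via `g`). -/
theorem stmt_11 (A B C : Type u) [CommRing A] [CommRing B] [CommRing C]
    [Algebra A B] [Algebra A C] [Algebra.Etale A B] [Algebra.Etale A C]
    (g : B →ₐ[A] C) :
    letI : Algebra B C := g.toRingHom.toAlgebra
    Algebra.Etale B C := by
  let : Algebra B C := g.toRingHom.toAlgebra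
  have : IsScalarTower A B C := .of_algebraMap_eq fun a ↦ (g.commutes a).symm
  exact .of_restrictScalars A B C
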